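/- Stuttering property: in a finite-state machine, given a τ-labeled path of places s1 →τ s2 →τ ... →τ sn →τ s_{n+1}, if s1 ≈ s_{n+1}, then s_i ≈ s_j for all i, j = 1, ..., n+1. -/
import Mathlib


/- Common framework: finite-state machines (FSMs) in the sense of Gorrieri.
   Places form a type `S`, labels a type `A` with a distinguished silent label `tau`.
   A transition is a triple `(s, ℓ, m) : S × A × Option S`, where the post-set `m`
   is either a single place (`some s'`) or the empty marking θ (`none`).
   An FSM is given by a finite set `T` of such transitions. -/

variable {S A : Type*}

/-- `Tr T s ℓ m` : place `s` has a transition labeled `ℓ` to post-set `m` (a place or θ). -/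
def Tr (T : Finset (S × A × Option S)) (s : S) (ℓ : A) (m : Option S) : Prop :=
  (s, ℓ, m) ∈ T

/-- `SilentReach T tau s m` : `s ⇒ε m`, the reflexive–transitive closure of silent moves. -/
inductive SilentReach (T : Finset (S × A × Option S)) (tau : A) : S → Option S → Prop
  | refl (s : S) : SilentReach T tau s (some s)
  | step {s s' : S} {m : Option S} :
      SilentReach T tau s (some s') → Tr T s' tau m → SilentReach T tau s m

/-- Lift of a place relation to `Option S`; a pair involving θ (`none`) is related
    only when both components are θ. -/
def OptRel (R : S → S → Prop) : Option S → Option S → Prop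
  | some a, some b => R a b
  | none, none => True
  | _, _ => False

/-- `R` is a branching bisimulation on the FSM with transitions `T` and silent label `tau`. -/
def IsBranchingBisim (T : Finset (S × A × Option S)) (tau : A) (R : S → S → Prop) : Prop :=
  ∀ s1 s2, R s1 s2 →
    (∀ ℓ m1, Tr T s1 ℓ m1 →
        (ℓ = tau ∧ ∃ m2, SilentReach T tau s2 m2 ∧ OptRel R (some s1) m2 ∧ OptRel R m1 m2) ∨
        (∃ s m2, SilentReach T tau s2 (some s) ∧ Tr T s ℓ m2 ∧ R s1 s ∧ OptRel R m1 m2)) ∧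
    (∀ ℓ m2, Tr T s2 ℓ m2 →
        (ℓ = tau ∧ ∃ m1, SilentReach T tau s1 m1 ∧ OptRel R m1 (some s2) ∧ OptRel R m1 m2) ∨
        (∃ s m1, SilentReach T tau s1 (some s) ∧ Tr T s ℓ m1 ∧ R s s2 ∧ OptRel R m1 m2))

/-- Branching bisimilarity on places: `s ≈ s'` iff some branching bisimulation relates them. -/
def Bisimilar (T : Finset (S × A × Option S)) (tau : A) (s s' : S) : Prop :=
  ∃ R, IsBranchingBisim T tau R ∧ R s s'

/-- Rooted branching bisimilarity `≈_c` on places. -/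
def RootedBisimilar (T : Finset (S × A × Option S)) (tau : A) (s1 s2 : S) : Prop :=
  ∀ ℓ : A,
    (∀ m1, Tr T s1 ℓ m1 → ∃ m2, Tr T s2 ℓ m2 ∧ OptRel (Bisimilar T tau) m1 m2) ∧
    (∀ m2, Tr T s2 ℓ m2 → ∃ m1, Tr T s1 ℓ m1 ∧ OptRel (Bisimilar T tau) m1 m2)

/-- The post-set of a transition, as a marking (multiset). -/
def mpost (m : Option S) : Multiset S :=
  m.elim 0 (fun s => {s})

variable [DecidableEq S] [DecidableEq A]

/-- `Fires T m t m'` : transition `t` is enabled at marking `m` (`•t ∈ m`) and its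
    firing produces `m' = (m ⊖ •t) ⊕ t•`. -/
def Fires (T : Finset (S × A × Option S)) (m : Multiset S) (t : S × A × Option S)
    (m' : Multiset S) : Prop :=
  t ∈ T ∧ t.1 ∈ m ∧ m' = m.erase t.1 + mpost t.2.2

/-- `MStep T m ℓ m'` : marking `m` evolves to `m'` by firing some `ℓ`-labeled transition. -/
def MStep (T : Finset (S × A × Option S)) (m : Multiset S) (ℓ : A) (m' : Multiset S) : Prop :=
  ∃ t, Fires T m t m' ∧ t.2.1 = ℓ

/-- `Reach T m m'` : `m' ∈ reach(m)`, i.e. `m'` is reachable from `m` by a firing sequence. -/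
def Reach (T : Finset (S × A × Option S)) : Multiset S → Multiset S → Prop :=
  Relation.ReflTransGen (fun m m' => ∃ t, Fires T m t m')

/-- The additive closure `R^⊕` of a place relation `R`, relating markings. -/
inductive AddClosure (R : S → S → Prop) : Multiset S → Multiset S → Prop
  | zero : AddClosure R 0 0
  | cons {s1 s2 : S} {m1 m2 : Multiset S} :
      R s1 s2 → AddClosure R m1 m2 → AddClosure R (s1 ::ₘ m1) (s2 ::ₘ m2)

/-- The restricted net `N \ H`: all transitions with a label in `H` are pruned.
    (Places `s\H` of the restricted net are identified with the places `s` of `N`.) -/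
def restrictNet (T : Finset (S × A × Option S)) (H : Finset A) : Finset (S × A × Option S) :=
  T.filter (fun t => t.2.1 ∉ H)

/-- `DNI T tau H m0` : for all markings `m1, m2` reachable from `m0` and every `h ∈ H`
    with `m1 →h m2`, the restricted markings are branching team equivalent in `N \ H`. -/
def DNI (T : Finset (S × A × Option S)) (tau : A) (H : Finset A) (m0 : Multiset S) : Prop :=
  ∀ m1 m2, Reach T m0 m1 → Reach T m0 m2 →
    ∀ h ∈ H, MStep T m1 h m2 → AddClosure (Bisimilar (restrictNet T H) tau) m1 m2

/-- `FiresSeq T m σ m'` : the transition sequence `σ` can fire from `m` ending in `m'`. -/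
inductive FiresSeq (T : Finset (S × A × Option S)) : Multiset S → List (S × A × Option S) → Multiset S → Prop
  | nil (m : Multiset S) : FiresSeq T m [] m
  | cons {m m' m'' : Multiset S} {t : S × A × Option S} {σ : List (S × A × Option S)} :
      Fires T m t m' → FiresSeq T m' σ m'' → FiresSeq T m (t :: σ) m''

/-! ### Auxiliary lemmas for the stuttering property -/

section StutterAux

/-- Clause (i) of the branching bisimulation transfer condition. -/
def BMove (T : Finset (S × A × Option S)) (tau : A) (R : S → S → Prop) (s1 s2 : S) : Prop :=
  ∀ ℓ m1, Tr T s1 ℓ m1 →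
    (ℓ = tau ∧ ∃ m2, SilentReach T tau s2 m2 ∧ OptRel R (some s1) m2 ∧ OptRel R m1 m2) ∨
    (∃ s m2, SilentReach T tau s2 (some s) ∧ Tr T s ℓ m2 ∧ R s1 s ∧ OptRel R m1 m2)

lemma optrel_mono {R R' : S → S → Prop} (h : ∀ a b, R a b → R' a b) :
    ∀ {m1 m2 : Option S}, OptRel R m1 m2 → OptRel R' m1 m2 := by
  intro m1 m2 hr
  cases m1 <;> cases m2 <;> first | exact hr.elim | exact trivial | exact h _ _ hr

lemma optrel_some_left {R : S → S → Prop} {m : Option S} {a : S} (h : OptRel R (some a) m) :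
    ∃ b, m = some b ∧ R a b := by
  cases m with
  | none => exact h.elim
  | some b => exact ⟨b, rfl, h⟩

lemma optrel_some_right {R : S → S → Prop} {m : Option S} {b : S} (h : OptRel R m (some b)) :
    ∃ a, m = some a ∧ R a b := by
  cases m with
  | none => exact h.elim
  | some a => exact ⟨a, rfl, h⟩

lemma optrel_flip {R : S → S → Prop} :
    ∀ {m1 m2 : Option S}, OptRel R m1 m2 → OptRel (fun a b => R b a) m2 m1 := by
  intro m1 m2 hr
  cases m1 <;> cases m2 <;> first | exact hr.elim | exact trivial | exact hr

lemma optrel_comp {R1 R2 : S → S → Prop} :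
    ∀ {m1 m2 m3 : Option S}, OptRel R1 m1 m2 → OptRel R2 m2 m3 →
      OptRel (fun a c => ∃ b, R1 a b ∧ R2 b c) m1 m3 := by
  intro m1 m2 m3 h1 h2
  cases m1 <;> cases m2 <;> cases m3 <;>
    first | exact h1.elim | exact h2.elim | exact trivial | exact ⟨_, h1, h2⟩

lemma bmove_mono {T : Finset (S × A × Option S)} {tau : A} {R R' : S → S → Prop}
    (h : ∀ a b, R a b → R' a b) {s1 s2 : S} (hm : BMove T tau R s1 s2) :
    BMove T tau R' s1 s2 := by
  intro ℓ m1 htr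
  rcases hm ℓ m1 htr with ⟨hℓ, m2, hsr, h1, h2⟩ | ⟨s, m2, hsr, htr', h1, h2⟩
  · exact Or.inl ⟨hℓ, m2, hsr, optrel_mono h h1, optrel_mono h h2⟩
  · exact Or.inr ⟨s, m2, hsr, htr', h s1 s h1, optrel_mono h h2⟩

/-- A relation is a branching bisimulation iff clause (i) holds for it and its flip. -/
lemma isBB_of_moves {T : Finset (S × A × Option S)} {tau : A} {R : S → S → Prop}
    (h1 : ∀ s1 s2, R s1 s2 → BMove T tau R s1 s2)
    (h2 : ∀ s1 s2, R s1 s2 → BMove T tau (fun a b => R b a) s2 s1) :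
    IsBranchingBisim T tau R := by
  intro s1 s2 hr
  refine ⟨h1 s1 s2 hr, ?_⟩
  intro ℓ m2 htr
  rcases h2 s1 s2 hr ℓ m2 htr with ⟨hℓ, m, hsr, ha, hb⟩ | ⟨s, m, hsr, htr', ha, hb⟩
  · exact Or.inl ⟨hℓ, m, hsr, optrel_flip ha, optrel_flip hb⟩
  · exact Or.inr ⟨s, m, hsr, htr', ha, optrel_flip hb⟩

lemma isBB_of_symm {T : Finset (S × A × Option S)} {tau : A} {R : S → S → Prop}
    (hsymm : ∀ a b, R a b → R b a)
    (h1 : ∀ s1 s2, R s1 s2 → BMove T tau R s1 s2) :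
    IsBranchingBisim T tau R :=
  isBB_of_moves h1 (fun s1 s2 hr =>
    bmove_mono (fun a b hab => hsymm a b hab) (h1 s2 s1 (hsymm s1 s2 hr)))

lemma isBB_flip {T : Finset (S × A × Option S)} {tau : A} {R : S → S → Prop}
    (h : IsBranchingBisim T tau R) : IsBranchingBisim T tau (fun a b => R b a) := by
  refine isBB_of_moves ?_ ?_
  · intro s1 s2 hr ℓ m1 htr
    rcases (h s2 s1 hr).2 ℓ m1 htr with ⟨hℓ, m, hsr, ha, hb⟩ | ⟨s, m, hsr, htr', ha, hb⟩
    · exact Or.inl ⟨hℓ, m, hsr, optrel_flip ha, optrel_flip hb⟩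
    · exact Or.inr ⟨s, m, hsr, htr', ha, optrel_flip hb⟩
  · intro s1 s2 hr
    exact (h s2 s1 hr).1

lemma bisimilar_refl {T : Finset (S × A × Option S)} {tau : A} (s : S) :
    Bisimilar T tau s s := by
  refine ⟨Eq, ?_, rfl⟩
  refine isBB_of_symm (fun a b h => h.symm) ?_
  intro s1 s2 hr ℓ m1 htr
  subst hr
  refine Or.inr ⟨s1, m1, SilentReach.refl s1, htr, rfl, ?_⟩
  cases m1 <;> first | exact trivial | rfl

lemma bisimilar_symm {T : Finset (S × A × Option S)} {tau : A} {s1 s2 : S}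
    (h : Bisimilar T tau s1 s2) : Bisimilar T tau s2 s1 := by
  obtain ⟨R, hR, hr⟩ := h
  exact ⟨fun a b => R b a, isBB_flip hR, hr⟩

lemma bisimilar_isBB {T : Finset (S × A × Option S)} {tau : A} :
    IsBranchingBisim T tau (Bisimilar T tau) := by
  refine isBB_of_symm (fun a b h => bisimilar_symm h) ?_
  rintro s1 s2 ⟨R, hR, hr⟩
  exact bmove_mono (fun a b hab => ⟨R, hR, hab⟩) ((hR s1 s2 hr).1)

lemma sr_trans {T : Finset (S × A × Option S)} {tau : A} {s u : S} {m : Option S}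
    (h1 : SilentReach T tau s (some u)) (h2 : SilentReach T tau u m) :
    SilentReach T tau s m := by
  have key : ∀ s0, SilentReach T tau s0 (some u) → SilentReach T tau s0 m := by
    clear h1
    induction h2 with
    | refl => exact fun s0 h1 => h1
    | @step s' m' hsr ht ih => exact fun s0 h1 => SilentReach.step (ih s0 h1) ht
  exact key s h1

/-- Silent-reach transfer along a branching bisimulation. -/
lemma sr_transfer {T : Finset (S × A × Option S)} {tau : A} {R : S → S → Prop}
    (hR : IsBranchingBisim T tau R) {s1 : S} {m : Option S}
    (hsr : SilentReach T tau s1 m) :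
    ∀ u, m = some u → ∀ s2, R s1 s2 → ∃ v, SilentReach T tau s2 (some v) ∧ R u v := by
  induction hsr with
  | refl =>
    rintro u hu s2 hr
    cases hu
    exact ⟨s2, SilentReach.refl s2, hr⟩
  | @step s' m' hsr' ht ih =>
    rintro u hu s2 hr
    subst hu
    obtain ⟨v, hv1, hv2⟩ := ih s' rfl s2 hr
    rcases (hR s' v hv2).1 tau (some u) ht with ⟨_, m2, hsr2, hx, hy⟩ |
      ⟨t, m2, hsr2, htr2, hx, hy⟩
    · obtain ⟨w, rfl, _⟩ := optrel_some_left hx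
      exact ⟨w, sr_trans hv1 hsr2, hy⟩
    · obtain ⟨w, rfl, hw⟩ := optrel_some_left hy
      exact ⟨w, sr_trans hv1 (SilentReach.step hsr2 htr2), hw⟩

lemma comp_bmove {T : Finset (S × A × Option S)} {tau : A} {R1 R2 : S → S → Prop}
    (h1 : IsBranchingBisim T tau R1) (h2 : IsBranchingBisim T tau R2)
    {s1 s2 s3 : S} (ha : R1 s1 s2) (hb : R2 s2 s3) :
    BMove T tau (fun a c => ∃ b, R1 a b ∧ R2 b c) s1 s3 := by
  intro ℓ m1 htr
  rcases (h1 s1 s2 ha).1 ℓ m1 htr with ⟨hℓ, m2, hsr, hx, hy⟩ | ⟨s, m2, hsr, htr2, hx, hy⟩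
  · obtain ⟨u, rfl, hu⟩ := optrel_some_left hx
    obtain ⟨x1, rfl, hx1⟩ := optrel_some_right hy
    obtain ⟨v, hv1, hv2⟩ := sr_transfer h2 hsr u rfl s3 hb
    exact Or.inl ⟨hℓ, some v, hv1, ⟨u, hu, hv2⟩, ⟨u, hx1, hv2⟩⟩
  · obtain ⟨v, hv1, hv2⟩ := sr_transfer h2 hsr s rfl s3 hb
    rcases (h2 s v hv2).1 ℓ m2 htr2 with ⟨hℓ, m3, hsr3, hx3, hy3⟩ |
      ⟨s', m3, hsr3, htr3, hx3, hy3⟩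
    · obtain ⟨w, rfl, hw⟩ := optrel_some_left hx3
      obtain ⟨y2, rfl, hy2⟩ := optrel_some_right hy3
      obtain ⟨x1, rfl, hx1⟩ := optrel_some_right hy
      exact Or.inl ⟨hℓ, some w, sr_trans hv1 hsr3, ⟨s, hx, hw⟩, ⟨y2, hx1, hy2⟩⟩
    · exact Or.inr ⟨s', m3, sr_trans hv1 hsr3, htr3, ⟨s, hx, hx3⟩, optrel_comp hy hy3⟩

lemma comp_isBB {T : Finset (S × A × Option S)} {tau : A} {R1 R2 : S → S → Prop}
    (h1 : IsBranchingBisim T tau R1) (h2 : IsBranchingBisim T tau R2) :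
    IsBranchingBisim T tau (fun a c => ∃ b, R1 a b ∧ R2 b c) := by
  refine isBB_of_moves ?_ ?_
  · rintro s1 s3 ⟨s2, ha, hb⟩
    exact comp_bmove h1 h2 ha hb
  · rintro s1 s3 ⟨s2, ha, hb⟩
    exact bmove_mono (fun a c h => ⟨h.choose, h.choose_spec.2, h.choose_spec.1⟩)
      (comp_bmove (isBB_flip h2) (isBB_flip h1) hb ha)

lemma bisimilar_trans {T : Finset (S × A × Option S)} {tau : A} {s1 s2 s3 : S}
    (h : Bisimilar T tau s1 s2) (h' : Bisimilar T tau s2 s3) : Bisimilar T tau s1 s3 := by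
  obtain ⟨R1, hR1, hr1⟩ := h
  obtain ⟨R2, hR2, hr2⟩ := h'
  exact ⟨_, comp_isBB hR1 hR2, ⟨s2, hr1, hr2⟩⟩

end StutterAux

/-- Stuttering property: given a τ-labeled path
    `f 0 →τ f 1 →τ ... →τ f n`, if `f 0 ≈ f n`, then `f i ≈ f j` for all `i, j`. -/
theorem stuttering_property [Fintype S] [Fintype A]
    (T : Finset (S × A × Option S)) (tau : A) (n : ℕ) (f : Fin (n + 1) → S)
    (hpath : ∀ i : Fin n, Tr T (f i.castSucc) tau (some (f i.succ)))
    (hbis : Bisimilar T tau (f 0) (f (Fin.last n))) :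
    ∀ i j : Fin (n + 1), Bisimilar T tau (f i) (f j) := by
  have hreach : ∀ i : Fin (n + 1), SilentReach T tau (f i) (some (f (Fin.last n))) := by
    have key : ∀ k : ℕ, ∀ i : Fin (n + 1), i.val + k = n →
        SilentReach T tau (f i) (some (f (Fin.last n))) := by
      intro k
      induction k with
      | zero =>
        intro i hi
        have : i = Fin.last n := Fin.ext (by simpa using hi)
        rw [this]
        exact SilentReach.refl _
      | succ k ih =>
        intro i hi
        have hlt : i.val < n := by omega
        have h1 : Tr T (f i) tau (some (f (⟨i.val + 1, by omega⟩ : Fin (n + 1)))) := by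
          have e1 : (⟨i.val, hlt⟩ : Fin n).castSucc = i := Fin.ext (by simp)
          have e2 : (⟨i.val, hlt⟩ : Fin n).succ = (⟨i.val + 1, by omega⟩ : Fin (n + 1)) :=
            Fin.ext (by simp)
          have := hpath ⟨i.val, hlt⟩
          rw [e1, e2] at this
          exact this
        exact sr_trans (SilentReach.step (SilentReach.refl (f i)) h1)
          (ih ⟨i.val + 1, by omega⟩ (by simp; omega))
    exact fun i => key (n - i.val) i (by omega)
  have hg : ∀ i : Fin (n + 1), ∃ g, SilentReach T tau (f (Fin.last n)) (some g) ∧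
      Bisimilar T tau (f i) g := by
    have key : ∀ j : ℕ, (hj : j ≤ n) → ∃ g, SilentReach T tau (f (Fin.last n)) (some g) ∧
        Bisimilar T tau (f ⟨j, by omega⟩) g := by
      intro j
      induction j with
      | zero =>
        intro _
        refine ⟨f (Fin.last n), SilentReach.refl _, ?_⟩
        have e : (⟨0, by omega⟩ : Fin (n + 1)) = 0 := Fin.ext (by simp)
        rw [e]
        exact hbis
      | succ j ih =>
        intro hj
        obtain ⟨g, hg1, hg2⟩ := ih (by omega)
        have htr : Tr T (f ⟨j, by omega⟩) tau (some (f ⟨j + 1, by omega⟩)) := by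
          have hlt : j < n := by omega
          have e1 : (⟨j, hlt⟩ : Fin n).castSucc = (⟨j, by omega⟩ : Fin (n + 1)) :=
            Fin.ext (by simp)
          have e2 : (⟨j, hlt⟩ : Fin n).succ = (⟨j + 1, by omega⟩ : Fin (n + 1)) :=
            Fin.ext (by simp)
          have := hpath ⟨j, hlt⟩
          rw [e1, e2] at this
          exact this
        rcases (bisimilar_isBB _ _ hg2).1 tau _ htr with ⟨_, m2, hsr, hx, hy⟩ |
          ⟨s, m2, hsr, htr2, _, hy⟩
        · obtain ⟨u, rfl, _⟩ := optrel_some_left hx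
          exact ⟨u, sr_trans hg1 hsr, hy⟩
        · obtain ⟨u, rfl, hu⟩ := optrel_some_left hy
          exact ⟨u, sr_trans hg1 (SilentReach.step hsr htr2), hu⟩
    intro i
    obtain ⟨g, h1, h2⟩ := key i.val (by omega)
    refine ⟨g, h1, ?_⟩
    have e : (⟨i.val, by omega⟩ : Fin (n + 1)) = i := Fin.ext rfl
    rwa [e] at h2
  set R' : S → S → Prop := fun a b =>
    Bisimilar T tau a b ∨ ((∃ i : Fin (n + 1), a = f i) ∧ Bisimilar T tau (f 0) b) ∨
      ((∃ i : Fin (n + 1), b = f i) ∧ Bisimilar T tau (f 0) a) with hR'def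
  have hsymm : ∀ a b, R' a b → R' b a := by
    rintro a b (h | ⟨hi, h⟩ | ⟨hi, h⟩)
    · exact Or.inl (bisimilar_symm h)
    · exact Or.inr (Or.inr ⟨hi, h⟩)
    · exact Or.inr (Or.inl ⟨hi, h⟩)
  have hR' : IsBranchingBisim T tau R' := by
    refine isBB_of_symm hsymm ?_
    rintro a b (h | ⟨⟨i, rfl⟩, hb⟩ | ⟨⟨i, rfl⟩, hb⟩)
    · exact bmove_mono (fun x y hxy => Or.inl hxy) ((bisimilar_isBB a b h).1)
    · -- a = f i and `f 0 ≈ b`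
      have hfnb : Bisimilar T tau (f (Fin.last n)) b :=
        bisimilar_trans (bisimilar_symm hbis) hb
      obtain ⟨g, hg1, hg2⟩ := hg i
      intro ℓ m1 htr
      rcases (bisimilar_isBB _ _ hg2).1 ℓ m1 htr with ⟨hℓ, m2, hsr, hx, hy⟩ |
        ⟨s, m2, hsr, htr2, hxs, hy⟩
      · obtain ⟨u, rfl, hu⟩ := optrel_some_left hx
        obtain ⟨x1, rfl, hx1⟩ := optrel_some_right hy
        obtain ⟨v, hv1, hv2⟩ := sr_transfer bisimilar_isBB (sr_trans hg1 hsr) u rfl b hfnb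
        exact Or.inl ⟨hℓ, some v, hv1, Or.inl (bisimilar_trans hu hv2),
          Or.inl (bisimilar_trans hx1 hv2)⟩
      · obtain ⟨v, hv1, hv2⟩ := sr_transfer bisimilar_isBB (sr_trans hg1 hsr) s rfl b hfnb
        rcases (bisimilar_isBB s v hv2).1 ℓ m2 htr2 with ⟨hℓ, m3, hsr3, hx3, hy3⟩ |
          ⟨s', m3, hsr3, htr3, hx3, hy3⟩
        · obtain ⟨w, rfl, hw⟩ := optrel_some_left hx3
          obtain ⟨y2, rfl, hy2⟩ := optrel_some_right hy3
          obtain ⟨x1, rfl, hx1⟩ := optrel_some_right hy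
          exact Or.inl ⟨hℓ, some w, sr_trans hv1 hsr3,
            Or.inl (bisimilar_trans hxs hw),
            Or.inl (bisimilar_trans hx1 hy2)⟩
        · refine Or.inr ⟨s', m3, sr_trans hv1 hsr3, htr3,
            Or.inl (bisimilar_trans hxs hx3), ?_⟩
          refine optrel_mono (fun x z hxz => Or.inl ?_) (optrel_comp hy hy3)
          obtain ⟨y, hy1, hy2⟩ := hxz
          exact bisimilar_trans hy1 hy2
    · -- b = f i and `f 0 ≈ a`
      have hafn : Bisimilar T tau a (f (Fin.last n)) :=
        bisimilar_trans (bisimilar_symm hb) hbis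
      intro ℓ m1 htr
      rcases (bisimilar_isBB a _ hafn).1 ℓ m1 htr with ⟨hℓ, m2, hsr, hx, hy⟩ |
        ⟨s, m2, hsr, htr2, hxs, hy⟩
      · obtain ⟨u, rfl, hu⟩ := optrel_some_left hx
        obtain ⟨x1, rfl, hx1⟩ := optrel_some_right hy
        exact Or.inl ⟨hℓ, some u, sr_trans (hreach i) hsr, Or.inl hu, Or.inl hx1⟩
      · exact Or.inr ⟨s, m2, sr_trans (hreach i) hsr, htr2, Or.inl hxs,
          optrel_mono (fun x y hxy => Or.inl hxy) hy⟩
  have key : ∀ i : Fin (n + 1), Bisimilar T tau (f i) (f (Fin.last n)) :=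
    fun i => ⟨R', hR', Or.inr (Or.inl ⟨⟨i, rfl⟩, hbis⟩)⟩
  intro i j
  exact bisimilar_trans (key i) (bisimilar_symm (key j))
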